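/- Let μ be a distribution over q-element subsets of [n] with |supp(μ)| ≤ ηn, and let 𝓜_i, 𝓒_i, 𝓢_i be the families of the inductive construction. If μ(𝓢₀) ≤ 1/(q+1), then there exists i ∈ [q] such that the pair (𝓒_i, 𝓢_i) is an (ηq, i)-constellation for μ. -/
import Mathlib


open scoped Classical BigOperators

noncomputable section

/-- `μ` is a probability distribution over subsets of `[n]`. -/
def IsDistr {n : ℕ} (μ : Finset (Fin n) → ℝ) : Prop :=
  (∀ Q, 0 ≤ μ Q) ∧ ∑ Q : Finset (Fin n), μ Q = 1

/-- The support of a distribution over subsets of `[n]`. -/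
def distSupp {n : ℕ} (μ : Finset (Fin n) → ℝ) : Finset (Finset (Fin n)) :=
  Finset.univ.filter fun Q => 0 < μ Q

/-- `μ(𝒜) = Σ_{Q ∈ 𝒜} μ(Q)`. -/
def mass {n : ℕ} (μ : Finset (Fin n) → ℝ) (A : Finset (Finset (Fin n))) : ℝ :=
  ∑ Q ∈ A, μ Q

/-- The set of indexes `j ∈ [n]` belonging to at least `n^{max(i,1)/q}` sets of the
family `M` (threshold `n^{1/q}` for `i = 0` and `n^{i/q}` for `i ≥ 1`). -/
def coreAt (n q : ℕ) (M : Finset (Finset (Fin n))) (i : ℕ) : Finset (Fin n) :=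
  Finset.univ.filter fun j =>
    (n:ℝ) ^ (((max i 1 : ℕ):ℝ)/(q:ℝ)) ≤ ((M.filter fun Q => j ∈ Q).card : ℝ)

/-- The sets `Q ∈ M` with `|Q ∩ coreAt n q M i| = q - i`. -/
def matchAt (n q : ℕ) (M : Finset (Finset (Fin n))) (i : ℕ) : Finset (Finset (Fin n)) :=
  M.filter fun Q => (Q ∩ coreAt n q M i).card = q - i

/-- The families `𝓜_i` of the inductive construction: `𝓜₀ = supp(μ)` and
`𝓜_i = 𝓜_{i-1} ∖ 𝓢_{i-1}`. -/
def Mfam (n q : ℕ) (μ : Finset (Fin n) → ℝ) : ℕ → Finset (Finset (Fin n))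
  | 0 => distSupp μ
  | i+1 => Mfam n q μ i \ matchAt n q (Mfam n q μ i) i

/-- The cores `𝓒_i` of the inductive construction. -/
def Cfam (n q : ℕ) (μ : Finset (Fin n) → ℝ) (i : ℕ) : Finset (Fin n) :=
  coreAt n q (Mfam n q μ i) i

/-- The families `𝓢_i = {Q ∈ 𝓜_i : |Q ∩ 𝓒_i| = q - i}` of the inductive construction. -/
def Sfam (n q : ℕ) (μ : Finset (Fin n) → ℝ) (i : ℕ) : Finset (Finset (Fin n)) :=
  matchAt n q (Mfam n q μ i) i

/-- `(C,𝒮)` is an `(η,i)`-constellation for `μ` (a distribution over `q`-element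
subsets of `[n]`). -/
def IsConstellation {n : ℕ} (q i : ℕ) (η : ℝ) (μ : Finset (Fin n) → ℝ)
    (C : Finset (Fin n)) (S : Finset (Finset (Fin n))) : Prop :=
  (∀ Q ∈ S, 0 < μ Q) ∧
  ((C.card : ℝ) < η * (n:ℝ) ^ (1 - (i:ℝ)/(q:ℝ))) ∧
  (1/((q:ℝ)+1) ≤ mass μ S) ∧
  (∀ Q ∈ S, (Q ∩ C).card = q - i) ∧
  (1 < i → ∀ j ∈ (S.biUnion id) \ C,
    ((S.filter fun Q => j ∈ Q).card : ℝ) ≤ (n:ℝ) ^ (((i:ℝ)-1)/(q:ℝ)))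

section Aux

variable {n q : ℕ} {μ : Finset (Fin n) → ℝ}

lemma Mfam_subset_supp : ∀ i, Mfam n q μ i ⊆ distSupp μ
  | 0 => Finset.Subset.refl _
  | (i+1) => Finset.sdiff_subset.trans (Mfam_subset_supp i)

lemma Mfam_succ_subset (i : ℕ) : Mfam n q μ (i+1) ⊆ Mfam n q μ i :=
  Finset.sdiff_subset

lemma Sfam_subset (i : ℕ) : Sfam n q μ i ⊆ Mfam n q μ i :=
  Finset.filter_subset _ _

lemma Cfam_anti (hn : 1 ≤ n) (i : ℕ) : Cfam n q μ (i+1) ⊆ Cfam n q μ i := by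
  intro j hj
  simp only [Cfam, coreAt, Finset.mem_filter, Finset.mem_univ, true_and] at hj ⊢
  have h1 : ((n:ℝ)) ^ (((max i 1 : ℕ):ℝ)/(q:ℝ)) ≤ (n:ℝ) ^ (((max (i+1) 1 : ℕ):ℝ)/(q:ℝ)) := by
    apply Real.rpow_le_rpow_of_exponent_le (by exact_mod_cast hn)
    have hmx : (max i 1) ≤ max (i+1) 1 := by omega
    gcongr
  refine h1.trans (hj.trans ?_)
  exact_mod_cast Finset.card_le_card (Finset.filter_subset_filter _ (Mfam_succ_subset i))

lemma inter_card_le (hn : 1 ≤ n) (hcard : ∀ Q ∈ distSupp μ, Q.card = q) :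
    ∀ i, ∀ Q ∈ Mfam n q μ i, (Q ∩ Cfam n q μ i).card ≤ q - i := by
  intro i
  induction i with
  | zero =>
    intro Q hQ
    calc (Q ∩ Cfam n q μ 0).card ≤ Q.card := Finset.card_le_card Finset.inter_subset_left
      _ = q := hcard Q hQ
  | succ i ih =>
    intro Q hQ
    have hQi : Q ∈ Mfam n q μ i := Mfam_succ_subset i hQ
    have h1 := ih Q hQi
    have h2 : (Q ∩ Cfam n q μ i).card ≠ q - i := by
      have hns := (Finset.mem_sdiff.mp hQ).2
      simp only [matchAt, Finset.mem_filter] at hns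
      intro h; exact hns ⟨hQi, h⟩
    have h3 : (Q ∩ Cfam n q μ (i+1)).card ≤ (Q ∩ Cfam n q μ i).card :=
      Finset.card_le_card (Finset.inter_subset_inter (Finset.Subset.refl _) (Cfam_anti hn i))
    omega

lemma Mfam_top (hn : 1 ≤ n) (hcard : ∀ Q ∈ distSupp μ, Q.card = q) :
    Mfam n q μ (q+1) = ∅ := by
  rw [Finset.eq_empty_iff_forall_notMem]
  intro Q hQ
  have h1 := inter_card_le hn hcard q Q (Mfam_succ_subset q hQ)
  have h1' : (Q ∩ coreAt n q (Mfam n q μ q) q).card ≤ q - q := h1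
  have hns := (Finset.mem_sdiff.mp hQ).2
  simp only [matchAt, Finset.mem_filter] at hns
  exact hns ⟨Mfam_succ_subset q hQ, by omega⟩

lemma mass_supp (hμ : IsDistr μ) : mass μ (distSupp μ) = 1 := by
  rw [mass, ← hμ.2]
  apply Finset.sum_subset (Finset.subset_univ _)
  intro Q _ hQ
  simp only [distSupp, Finset.mem_filter, Finset.mem_univ, true_and, not_lt] at hQ
  linarith [hμ.1 Q]

lemma mass_step (i : ℕ) :
    mass μ (Mfam n q μ (i+1)) = mass μ (Mfam n q μ i) - mass μ (Sfam n q μ i) :=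
  Finset.sum_sdiff_eq_sub (Finset.filter_subset _ _)

lemma mass_sum (hμ : IsDistr μ) (hn : 1 ≤ n) (hcard : ∀ Q ∈ distSupp μ, Q.card = q) :
    ∑ i ∈ Finset.range (q+1), mass μ (Sfam n q μ i) = 1 := by
  have h : ∀ i ∈ Finset.range (q+1), mass μ (Sfam n q μ i)
      = mass μ (Mfam n q μ i) - mass μ (Mfam n q μ (i+1)) := by
    intro i _; rw [mass_step]; ring
  rw [Finset.sum_congr rfl h, Finset.sum_range_sub' (fun i => mass μ (Mfam n q μ i)),
    Mfam_top hn hcard]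
  show mass μ (distSupp μ) - mass μ ∅ = 1
  rw [mass_supp hμ]
  simp [mass]

lemma double_count (M : Finset (Finset (Fin n))) (C : Finset (Fin n)) :
    ∑ j ∈ C, (M.filter fun Q => j ∈ Q).card = ∑ Q ∈ M, (Q ∩ C).card := by
  simp only [Finset.card_filter]
  rw [Finset.sum_comm]
  apply Finset.sum_congr rfl
  intro Q _
  rw [Finset.inter_comm, ← Finset.filter_mem_eq_inter, Finset.card_filter]

end Aux

/-- If `μ(𝓢₀) ≤ 1/(q+1)`, then for some `i ∈ [q]` the pair
`(𝓒_i, 𝓢_i)` is an `(ηq, i)`-constellation for `μ`. -/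
theorem stmt12 {n q : ℕ} (η : ℝ) (hq : 0 < q)
    (μ : Finset (Fin n) → ℝ) (hμ : IsDistr μ)
    (hcard : ∀ Q, 0 < μ Q → Q.card = q)
    (hsupp : ((distSupp μ).card : ℝ) ≤ η * n)
    (h0 : mass μ (Sfam n q μ 0) ≤ 1/((q:ℝ)+1)) :
    ∃ i : ℕ, 1 ≤ i ∧ i ≤ q ∧
      IsConstellation q i (η * q) μ (Cfam n q μ i) (Sfam n q μ i) := by
  -- the support is nonempty and n ≥ 1
  obtain ⟨Q0, hQ0⟩ : ∃ Q, 0 < μ Q := by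
    by_contra h
    push_neg at h
    have hz : ∑ Q : Finset (Fin n), μ Q = 0 :=
      Finset.sum_eq_zero fun Q _ => le_antisymm (h Q) (hμ.1 Q)
    rw [hμ.2] at hz; norm_num at hz
  have hn : 1 ≤ n := by
    have hc := hcard Q0 hQ0
    obtain ⟨j, -⟩ := Finset.card_pos.mp (hc ▸ hq)
    exact j.pos
  have hn0 : (0:ℝ) < n := by exact_mod_cast hn
  have hcard' : ∀ Q ∈ distSupp μ, Q.card = q := fun Q hQ =>
    hcard Q (by simpa [distSupp] using hQ)
  have hq1 : (0:ℝ) < (q:ℝ) + 1 := by positivity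
  -- pigeonhole: some i ∈ [1,q] has mass ≥ 1/(q+1)
  have hsum := mass_sum (μ := μ) hμ hn hcard'
  obtain ⟨i, hi1, hiq, hSi⟩ :
      ∃ i, 1 ≤ i ∧ i ≤ q ∧ 1/((q:ℝ)+1) ≤ mass μ (Sfam n q μ i) := by
    by_contra h
    push_neg at h
    have hrange : Finset.range (q+1) = insert 0 (Finset.Icc 1 q) := by
      ext x; simp only [Finset.mem_range, Finset.mem_insert, Finset.mem_Icc]; omega
    rw [hrange, Finset.sum_insert (by simp)] at hsum
    have hlt : ∑ i ∈ Finset.Icc 1 q, mass μ (Sfam n q μ i)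
        < ∑ _i ∈ Finset.Icc 1 q, 1/((q:ℝ)+1) := by
      apply Finset.sum_lt_sum_of_nonempty
      · exact ⟨1, Finset.mem_Icc.mpr ⟨le_refl _, hq⟩⟩
      · intro i hi
        obtain ⟨h1, h2⟩ := Finset.mem_Icc.mp hi
        exact h i h1 h2
    rw [Finset.sum_const, Nat.card_Icc, nsmul_eq_mul] at hlt
    have hk : ((q + 1 - 1 : ℕ) : ℝ) = (q:ℝ) := by norm_num
    rw [hk] at hlt
    have key : (q:ℝ) * (1/((q:ℝ)+1)) + 1/((q:ℝ)+1) = 1 := by field_simp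
    linarith
  refine ⟨i, hi1, hiq, ?_⟩
  set C : Finset (Fin n) := Cfam n q μ i with hC
  set S : Finset (Finset (Fin n)) := Sfam n q μ i with hS
  set M : Finset (Finset (Fin n)) := Mfam n q μ i with hM
  have hSM : S ⊆ M := Sfam_subset i
  have hMsupp : M ⊆ distSupp μ := Mfam_subset_supp i
  have hSmem : ∀ Q ∈ S, Q ∈ M ∧ (Q ∩ C).card = q - i := by
    intro Q hQ
    have := Finset.mem_filter.mp hQ
    exact ⟨this.1, this.2⟩
  -- S nonempty
  have hpos : (0:ℝ) < 1/((q:ℝ)+1) := by positivity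
  have hSne : S.Nonempty := by
    rw [Finset.nonempty_iff_ne_empty]
    intro h
    have hz : mass μ S = 0 := by rw [h]; simp [mass]
    linarith
  obtain ⟨Q1, hQ1⟩ := hSne
  have hMne : M.Nonempty := ⟨Q1, hSM hQ1⟩
  have hsupp_pos : (0:ℝ) < η * n := by
    have h1 : (0:ℝ) < ((distSupp μ).card : ℝ) := by
      exact_mod_cast Finset.card_pos.mpr ⟨Q1, hMsupp (hSM hQ1)⟩
    linarith
  -- degree lower bound on the core
  have hmax : (max i 1) = i := by omega
  have hdeg : ∀ j ∈ C, (n:ℝ) ^ ((i:ℝ)/(q:ℝ)) ≤ ((M.filter fun Q => j ∈ Q).card : ℝ) := by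
    intro j hj
    have := (Finset.mem_filter.mp hj).2
    rwa [hmax] at this
  -- counting bound on |C|
  have hcount : (C.card : ℝ) * (n:ℝ) ^ ((i:ℝ)/(q:ℝ)) < η * q * n := by
    have s1 : (C.card : ℝ) * (n:ℝ) ^ ((i:ℝ)/(q:ℝ))
        ≤ ∑ j ∈ C, ((M.filter fun Q => j ∈ Q).card : ℝ) := by
      have := Finset.card_nsmul_le_sum C
        (fun j => ((M.filter fun Q => j ∈ Q).card : ℝ)) ((n:ℝ) ^ ((i:ℝ)/(q:ℝ))) hdeg
      rwa [nsmul_eq_mul] at this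
    have s2 : ∑ j ∈ C, ((M.filter fun Q => j ∈ Q).card : ℝ)
        = ((∑ Q ∈ M, (Q ∩ C).card : ℕ) : ℝ) := by
      push_cast
      exact_mod_cast congrArg (Nat.cast : ℕ → ℝ) (double_count M C)
    have s3 : ∑ Q ∈ M, (Q ∩ C).card ≤ M.card * (q - 1) := by
      have h := Finset.sum_le_card_nsmul M (fun Q => (Q ∩ C).card) (q - 1) ?_
      · rwa [smul_eq_mul] at h
      · intro Q hQ
        show (Q ∩ C).card ≤ q - 1
        have h2 : (Q ∩ C).card ≤ q - i := inter_card_le hn hcard' i Q hQ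
        omega
    have s4 : ((M.card * (q - 1) : ℕ) : ℝ) ≤ (η * n) * ((q:ℝ) - 1) := by
      have hMc : ((M.card : ℕ) : ℝ) ≤ η * n := by
        have := Finset.card_le_card hMsupp
        have h2 : ((M.card : ℕ) : ℝ) ≤ ((distSupp μ).card : ℝ) := by exact_mod_cast this
        linarith
      push_cast
      have h1 : ((q - 1 : ℕ) : ℝ) = (q:ℝ) - 1 := by
        rw [Nat.cast_sub hq]; norm_num
      rw [h1]
      have hcq : (0:ℝ) ≤ (q:ℝ) - 1 := by
        have : (1:ℕ) ≤ q := hq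
        have : (1:ℝ) ≤ (q:ℝ) := by exact_mod_cast this
        linarith
      exact mul_le_mul_of_nonneg_right hMc hcq
    have s5 : (η * n) * ((q:ℝ) - 1) < η * q * n := by nlinarith
    calc (C.card : ℝ) * (n:ℝ) ^ ((i:ℝ)/(q:ℝ))
        ≤ ((∑ Q ∈ M, (Q ∩ C).card : ℕ) : ℝ) := s2 ▸ s1
      _ ≤ ((M.card * (q - 1) : ℕ) : ℝ) := by exact_mod_cast s3
      _ ≤ (η * n) * ((q:ℝ) - 1) := s4
      _ < η * q * n := s5
  refine ⟨?_, ?_, ?_, ?_, ?_⟩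
  · -- positivity on S
    intro Q hQ
    have := hMsupp (hSM hQ)
    simpa [distSupp] using this
  · -- core size bound
    have hT : (0:ℝ) < (n:ℝ) ^ ((i:ℝ)/(q:ℝ)) := Real.rpow_pos_of_pos hn0 _
    have hmul : η * q * (n:ℝ) ^ (1 - (i:ℝ)/(q:ℝ)) * (n:ℝ) ^ ((i:ℝ)/(q:ℝ)) = η * q * n := by
      rw [mul_assoc, ← Real.rpow_add hn0]
      norm_num
    have h := hcount
    rw [← hmul] at h
    exact lt_of_mul_lt_mul_right h hT.le
  · exact hSi
  · intro Q hQ; exact (hSmem Q hQ).2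
  · -- degree condition for i > 1
    intro hi2 j hj
    obtain ⟨k, rfl⟩ : ∃ k, i = k + 1 := ⟨i - 1, by omega⟩
    have hk : 1 ≤ k := by omega
    obtain ⟨hjU, hjC⟩ := Finset.mem_sdiff.mp hj
    obtain ⟨Q', hQ'S, hjQ'⟩ := Finset.mem_biUnion.mp hjU
    simp only [id] at hjQ'
    -- Q' ∩ C_k = Q' ∩ C_{k+1}
    have hQ'M : Q' ∈ Mfam n q μ (k+1) := hSM hQ'S
    have hQ'Mk : Q' ∈ Mfam n q μ k := Mfam_succ_subset k hQ'M
    have h1 : (Q' ∩ Cfam n q μ k).card ≤ q - k := inter_card_le hn hcard' k Q' hQ'Mk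
    have h2 : (Q' ∩ Cfam n q μ k).card ≠ q - k := by
      have hns := (Finset.mem_sdiff.mp hQ'M).2
      simp only [matchAt, Finset.mem_filter] at hns
      intro h; exact hns ⟨hQ'Mk, h⟩
    have h3 : (Q' ∩ C).card = q - (k+1) := (hSmem Q' hQ'S).2
    have hsub : Q' ∩ C ⊆ Q' ∩ Cfam n q μ k :=
      Finset.inter_subset_inter (Finset.Subset.refl _) (Cfam_anti hn k)
    have heq : Q' ∩ C = Q' ∩ Cfam n q μ k := by
      apply Finset.eq_of_subset_of_card_le hsub
      omega
    have hjCk : j ∉ Cfam n q μ k := by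
      intro hmem
      have : j ∈ Q' ∩ C := heq ▸ Finset.mem_inter.mpr ⟨hjQ', hmem⟩
      exact hjC (Finset.mem_inter.mp this).2
    -- degree bound from j ∉ C_k
    have hdegk : ((Mfam n q μ k).filter fun Q => j ∈ Q).card
        < (n:ℝ) ^ (((max k 1 : ℕ):ℝ)/(q:ℝ)) := by
      have := hjCk
      simp only [Cfam, coreAt, Finset.mem_filter, Finset.mem_univ, true_and, not_le] at this
      exact this
    have hmaxk : (max k 1) = k := by omega
    rw [hmaxk] at hdegk
    have hmono : (S.filter fun Q => j ∈ Q).card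
        ≤ ((Mfam n q μ k).filter fun Q => j ∈ Q).card :=
      Finset.card_le_card (Finset.filter_subset_filter _ (hSM.trans (Mfam_succ_subset k)))
    have hexp : (((k+1 : ℕ):ℝ) - 1)/(q:ℝ) = ((k:ℕ):ℝ)/(q:ℝ) := by push_cast; ring_nf
    rw [hexp]
    calc ((S.filter fun Q => j ∈ Q).card : ℝ)
        ≤ (((Mfam n q μ k).filter fun Q => j ∈ Q).card : ℝ) := by exact_mod_cast hmono
      _ ≤ (n:ℝ) ^ (((k:ℕ):ℝ)/(q:ℝ)) := hdegk.le
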